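/- arXiv:2407.10418 — 3 statements merged into one kernel-verified Lean document; each statement's English description precedes it below -/
import Mathlib

section
/- For any function f_θ : R^d → R, design matrix X ∈ R^{n×d}, outcomes y ∈ R^n, and τ > 0, the outcome-optimistic loss min_{μ ∈ R^n} { (1/n)Σ_i (y_i + μ_i − f_θ(x_i))² + τ^{-1}·(1/n)Σ_i |μ_i| } equals (2/n)·Σ_{i=1}^n ρ_{1/(2τ)}(y_i − f_θ(x_i)), where ρ_η is Huber's function. -/
open Finset

/-- Huber's function with threshold `η`. -/
noncomputable def huber (η u : ℝ) : ℝ :=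
  if |u| ≤ η then u ^ 2 / 2 else η * |u| - η ^ 2 / 2

/-- Explicit minimizer of `m ↦ (r+m)^2 + 2η|m|`. -/
noncomputable def hmin (η r : ℝ) : ℝ :=
  if |r| ≤ η then 0 else if 0 ≤ r then η - r else -η - r

lemma huber_lb (η r m : ℝ) (hη : 0 < η) :
    2 * huber η r ≤ (r + m) ^ 2 + 2 * η * |m| := by
  unfold huber
  split_ifs with h
  · have h1 : |r| * |m| ≤ η * |m| := mul_le_mul_of_nonneg_right h (abs_nonneg m)
    have h2 : -(|r| * |m|) ≤ r * m := by rw [← abs_mul]; exact neg_abs_le _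
    nlinarith [sq_nonneg m]
  · have h3 : |r| - |r + m| ≤ |m| := by
      have h := abs_sub_abs_le_abs_sub r (r + m)
      have : r - (r + m) = -m := by ring
      rw [this, abs_neg] at h
      exact h
    have h4 : (r + m) ^ 2 = |r + m| ^ 2 := (sq_abs _).symm
    nlinarith [sq_nonneg (|r + m| - η), mul_le_mul_of_nonneg_left h3 (le_of_lt hη)]

lemma huber_min (η r : ℝ) (hη : 0 < η) :
    (r + hmin η r) ^ 2 + 2 * η * |hmin η r| = 2 * huber η r := by
  unfold hmin huber
  split_ifs with h h2
  · simp; ring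
  · have hr : η < r := by
      have := not_le.1 h
      rwa [abs_of_nonneg h2] at this
    rw [abs_of_nonneg h2, abs_of_nonpos (by linarith : η - r ≤ 0)]
    ring
  · have hr : r < -η := by
      have := not_le.1 h
      rw [abs_of_neg (not_le.1 h2)] at this
      linarith
    rw [abs_of_neg (not_le.1 h2), abs_of_nonneg (by linarith : (0:ℝ) ≤ -η - r)]
    ring

/-- Nonlinear extension of Gannaz (2007): the outcome-optimistic loss with L1 slack
penalty equals `(2/n) Σ ρ_{1/(2τ)}(y_i - f_θ(x_i))`. -/
theorem stmt3 (n d : ℕ) (hn : 0 < n) (f : (Fin d → ℝ) → ℝ)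
    (X : Fin n → Fin d → ℝ) (y : Fin n → ℝ) (τ : ℝ) (hτ : 0 < τ) :
    (⨅ μ : Fin n → ℝ,
        ((1 / (n : ℝ)) * ∑ i, (y i + μ i - f (X i)) ^ 2
          + τ⁻¹ * ((1 / (n : ℝ)) * ∑ i, |μ i|)))
      = (2 / (n : ℝ)) * ∑ i, huber (1 / (2 * τ)) (y i - f (X i)) := by
  have hη : (0:ℝ) < 1 / (2 * τ) := by positivity
  set η : ℝ := 1 / (2 * τ) with hηd
  have hτinv : τ⁻¹ = 2 * η := by rw [hηd]; field_simp
  have hnn : (0:ℝ) < (n:ℝ) := by exact_mod_cast hn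
  set r : Fin n → ℝ := fun i => y i - f (X i) with hr
  have hrw : ∀ μ : Fin n → ℝ,
      ((1 / (n : ℝ)) * ∑ i, (y i + μ i - f (X i)) ^ 2
          + τ⁻¹ * ((1 / (n : ℝ)) * ∑ i, |μ i|))
      = (1 / (n : ℝ)) * ∑ i, ((r i + μ i) ^ 2 + 2 * η * |μ i|) := by
    intro μ
    rw [hτinv, Finset.sum_add_distrib]
    rw [show ∑ i, (y i + μ i - f (X i)) ^ 2 = ∑ i, (r i + μ i) ^ 2 from
      Finset.sum_congr rfl fun i _ => by rw [hr]; ring]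
    rw [show ∑ i, 2 * η * |μ i| = 2 * η * ∑ i, |μ i| from (Finset.mul_sum _ _ _).symm]
    ring
  have hlb : ∀ μ : Fin n → ℝ,
      (2 / (n : ℝ)) * ∑ i, huber η (r i)
        ≤ (1 / (n : ℝ)) * ∑ i, ((r i + μ i) ^ 2 + 2 * η * |μ i|) := by
    intro μ
    have hsum : ∑ i, 2 * huber η (r i) ≤ ∑ i, ((r i + μ i) ^ 2 + 2 * η * |μ i|) :=
      Finset.sum_le_sum fun i _ => huber_lb η (r i) (μ i) hη
    have h2 : (2 / (n : ℝ)) * ∑ i, huber η (r i)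
        = (1 / (n : ℝ)) * ∑ i, 2 * huber η (r i) := by
      rw [show ∑ i, 2 * huber η (r i) = 2 * ∑ i, huber η (r i) from
        (Finset.mul_sum _ _ _).symm]
      ring
    rw [h2]
    exact mul_le_mul_of_nonneg_left hsum (by positivity)
  apply le_antisymm
  · have hbdd : BddBelow (Set.range fun μ : Fin n → ℝ =>
        ((1 / (n : ℝ)) * ∑ i, (y i + μ i - f (X i)) ^ 2
          + τ⁻¹ * ((1 / (n : ℝ)) * ∑ i, |μ i|))) := by
      refine ⟨(2 / (n : ℝ)) * ∑ i, huber η (r i), ?_⟩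
      rintro x ⟨μ, rfl⟩
      have h := hlb μ
      rw [← hrw μ] at h
      exact h
    have hle := ciInf_le hbdd (fun i => hmin η (r i))
    refine le_trans hle ?_
    rw [hrw]
    have : ∑ i, ((r i + hmin η (r i)) ^ 2 + 2 * η * |hmin η (r i)|)
        = ∑ i, 2 * huber η (r i) :=
      Finset.sum_congr rfl fun i _ => huber_min η (r i) hη
    rw [this, show ∑ i, 2 * huber η (r i) = 2 * ∑ i, huber η (r i) from
      (Finset.mul_sum _ _ _).symm]
    ring_nf
    exact le_refl _
  · refine le_ciInf fun μ => ?_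
    have h := hlb μ
    rw [← hrw μ] at h
    exact h
end

section
/- For the linear model f_θ(x) = ⟨x, θ⟩ and sup-norm perturbation constraint, the covariate-pessimistic loss admits the closed form: max over Δ ∈ R^{n×d} with max_{i,j}|δ_{ij}| ≤ τ of (1/n)Σ_i (y_i − ⟨x_i + δ_i, θ⟩)² = (1/n)Σ_{i=1}^n (|y_i − ⟨x_i, θ⟩| + τ‖θ‖_1)², where ‖θ‖_1 = Σ_j |θ_j|. -/
open Finset

/-- Covariate-pessimistic loss for the linear model with entrywise sup-norm constraint:
`max_{|δ_{ij}| ≤ τ} (1/n)Σ (y_i - ⟨x_i+δ_i,θ⟩)² = (1/n)Σ (|y_i - ⟨x_i,θ⟩| + τ‖θ‖₁)²`. -/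
theorem stmt8 (n d : ℕ) (hn : 0 < n) (τ : ℝ) (hτ : 0 ≤ τ)
    (X : Fin n → Fin d → ℝ) (y : Fin n → ℝ) (θ : Fin d → ℝ) :
    (⨆ Δ : {Δ : Fin n → Fin d → ℝ // ∀ i j, |Δ i j| ≤ τ},
        (1 / (n : ℝ)) * ∑ i, (y i - ∑ j, (X i j + Δ.1 i j) * θ j) ^ 2)
      = (1 / (n : ℝ)) * ∑ i, (|y i - ∑ j, X i j * θ j| + τ * ∑ j, |θ j|) ^ 2 := by
  have hninv : 0 ≤ (1 / (n : ℝ)) := by positivity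
  set T := ∑ j, |θ j| with hT
  have hT0 : 0 ≤ T := Finset.sum_nonneg fun j _ => abs_nonneg _
  -- upper bound for every feasible Δ
  have key : ∀ (Δ : Fin n → Fin d → ℝ), (∀ i j, |Δ i j| ≤ τ) →
      (1 / (n : ℝ)) * ∑ i, (y i - ∑ j, (X i j + Δ i j) * θ j) ^ 2
        ≤ (1 / (n : ℝ)) * ∑ i, (|y i - ∑ j, X i j * θ j| + τ * T) ^ 2 := by
    intro Δ hΔ
    apply mul_le_mul_of_nonneg_left _ hninv
    apply Finset.sum_le_sum
    intro i _
    have h1 : ∑ j, (X i j + Δ i j) * θ j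
        = (∑ j, X i j * θ j) + ∑ j, Δ i j * θ j := by
      rw [← Finset.sum_add_distrib]
      exact Finset.sum_congr rfl fun j _ => by ring
    set r := y i - ∑ j, X i j * θ j with hr
    have h2 : |∑ j, Δ i j * θ j| ≤ τ * T := by
      calc |∑ j, Δ i j * θ j| ≤ ∑ j, |Δ i j * θ j| := Finset.abs_sum_le_sum_abs _ _
        _ ≤ ∑ j, τ * |θ j| := Finset.sum_le_sum fun j _ => by
              rw [abs_mul]
              exact mul_le_mul_of_nonneg_right (hΔ i j) (abs_nonneg _)
        _ = τ * T := by rw [hT, Finset.mul_sum]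
    have h3 : |y i - ∑ j, (X i j + Δ i j) * θ j| ≤ |r| + τ * T := by
      rw [h1, show y i - ((∑ j, X i j * θ j) + ∑ j, Δ i j * θ j)
            = r - ∑ j, Δ i j * θ j by rw [hr]; ring]
      exact (abs_sub _ _).trans (add_le_add_right h2 _)
    calc (y i - ∑ j, (X i j + Δ i j) * θ j) ^ 2
        = |y i - ∑ j, (X i j + Δ i j) * θ j| ^ 2 := (sq_abs _).symm
      _ ≤ (|r| + τ * T) ^ 2 := by
          apply pow_le_pow_left₀ (abs_nonneg _) h3
  haveI : Nonempty {Δ : Fin n → Fin d → ℝ // ∀ i j, |Δ i j| ≤ τ} :=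
    ⟨⟨fun _ _ => 0, by simp [hτ]⟩⟩
  refine le_antisymm (ciSup_le fun Δ => key Δ.1 Δ.2) ?_
  -- the witness achieving the bound
  set Δ₀ : Fin n → Fin d → ℝ := fun i j =>
    (if 0 ≤ y i - ∑ j', X i j' * θ j' then -τ else τ) * (if 0 ≤ θ j then 1 else -1)
    with hΔ₀
  have hfeas : ∀ i j, |Δ₀ i j| ≤ τ := by
    intro i j
    rw [hΔ₀]
    simp only
    rw [abs_mul]
    rcases le_or_gt 0 (y i - ∑ j', X i j' * θ j') with h | h <;>
      rcases le_or_gt 0 (θ j) with h' | h' <;>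
      simp [h, h', not_le.mpr, abs_of_nonneg hτ, abs_of_nonpos (neg_nonpos.mpr hτ)]
  have hval : (1 / (n : ℝ)) * ∑ i, (y i - ∑ j, (X i j + Δ₀ i j) * θ j) ^ 2
      = (1 / (n : ℝ)) * ∑ i, (|y i - ∑ j, X i j * θ j| + τ * T) ^ 2 := by
    congr 1
    apply Finset.sum_congr rfl
    intro i _
    have h1 : ∑ j, (X i j + Δ₀ i j) * θ j
        = (∑ j, X i j * θ j) + ∑ j, Δ₀ i j * θ j := by
      rw [← Finset.sum_add_distrib]
      exact Finset.sum_congr rfl fun j _ => by ring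
    set r := y i - ∑ j', X i j' * θ j' with hr
    have h2 : ∑ j, Δ₀ i j * θ j = (if 0 ≤ r then -τ else τ) * T := by
      rw [hT, Finset.mul_sum]
      apply Finset.sum_congr rfl
      intro j _
      rw [hΔ₀]
      simp only [← hr]
      rcases le_or_gt 0 (θ j) with h' | h' <;>
        simp [h', abs_of_nonneg, abs_of_neg, mul_assoc]
    rw [h1, h2, show y i - ((∑ j, X i j * θ j) + (if 0 ≤ r then -τ else τ) * T)
          = r - (if 0 ≤ r then -τ else τ) * T by rw [hr]; ring]
    rcases le_or_gt 0 r with h | h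
    · rw [if_pos h, abs_of_nonneg h]; ring
    · rw [if_neg (not_le.mpr h), abs_of_neg h]; ring
  calc (1 / (n : ℝ)) * ∑ i, (|y i - ∑ j, X i j * θ j| + τ * T) ^ 2
      = (1 / (n : ℝ)) * ∑ i, (y i - ∑ j, (X i j + Δ₀ i j) * θ j) ^ 2 := hval.symm
    _ ≤ _ := le_ciSup (f := fun Δ : {Δ : Fin n → Fin d → ℝ // ∀ i j, |Δ i j| ≤ τ} =>
          (1 / (n : ℝ)) * ∑ i, (y i - ∑ j, (X i j + Δ.1 i j) * θ j) ^ 2)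
          ⟨(1 / (n : ℝ)) * ∑ i, (|y i - ∑ j, X i j * θ j| + τ * T) ^ 2, by
            rintro v ⟨Δ, rfl⟩; exact key Δ.1 Δ.2⟩ ⟨Δ₀, hfeas⟩
end

section
/- One-row version of the adversarial-training/regularization duality: for any x, θ ∈ R^d, y ∈ R, τ > 0, and dual exponents β, β* > 0 with 1/β + 1/β* = 1, max over δ ∈ R^d with ‖δ‖_β ≤ τ of (y − ⟨x + δ, θ⟩)² = (|y − ⟨x, θ⟩| + τ‖θ‖_{β*})². -/
open Finset

/-- One-row adversarial-training/regularization duality: for dual exponents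
`1/β + 1/β* = 1`, `max_{‖δ‖_β ≤ τ} (y - ⟨x+δ,θ⟩)² = (|y - ⟨x,θ⟩| + τ‖θ‖_{β*})²`. -/
theorem stmt9 (d : ℕ) (β βs τ : ℝ) (hβ : 0 < β) (hβs : 0 < βs)
    (hdual : 1 / β + 1 / βs = 1) (hτ : 0 < τ)
    (x θ : Fin d → ℝ) (y : ℝ) :
    (⨆ δ : {δ : Fin d → ℝ // (∑ j, |δ j| ^ β) ^ (1 / β) ≤ τ},
        (y - ∑ j, (x j + δ.1 j) * θ j) ^ 2)
      = (|y - ∑ j, x j * θ j| + τ * (∑ j, |θ j| ^ βs) ^ (1 / βs)) ^ 2 := by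
  -- basic exponent facts
  have hβ1 : 1 < β := by
    rw [← div_lt_one hβ]
    have : 0 < 1 / βs := by positivity
    linarith
  have hβs1 : 1 < βs := by
    rw [← div_lt_one hβs]
    have : 0 < 1 / β := by positivity
    linarith
  have hconj : Real.HolderConjugate β βs := by
    rw [Real.holderConjugate_iff]
    constructor
    · exact hβ1
    · rw [← one_div, ← one_div]; exact hdual
  have hkey : (βs - 1) * β = βs := by
    have h1 : βs + β = β * βs := by
      field_simp at hdual
      linarith
    nlinarith
  -- nonempty subtype (δ = 0 is feasible)
  have h0feas : ((∑ j, |(0 : Fin d → ℝ) j| ^ β) ^ (1 / β) : ℝ) ≤ τ := by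
    simp only [Pi.zero_apply, abs_zero, Real.zero_rpow hβ.ne', Finset.sum_const_zero,
      Real.zero_rpow (one_div_ne_zero hβ.ne')]
    linarith
  haveI : Nonempty {δ : Fin d → ℝ // (∑ j, |δ j| ^ β) ^ (1 / β) ≤ τ} := ⟨⟨0, h0feas⟩⟩
  set r : ℝ := y - ∑ j, x j * θ j with hr
  set S : ℝ := ∑ j, |θ j| ^ βs with hSdef
  set N : ℝ := S ^ (1 / βs) with hNdef
  have hS0 : 0 ≤ S := Finset.sum_nonneg fun j _ => Real.rpow_nonneg (abs_nonneg _) _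
  have hN0 : 0 ≤ N := Real.rpow_nonneg hS0 _
  -- rewrite the objective
  have hobj : ∀ δ : Fin d → ℝ,
      y - ∑ j, (x j + δ j) * θ j = r - ∑ j, δ j * θ j := by
    intro δ
    simp only [add_mul, Finset.sum_add_distrib, hr]
    ring
  -- Hölder upper bound on the inner product
  have hip : ∀ δ : Fin d → ℝ, (∑ j, |δ j| ^ β) ^ (1 / β) ≤ τ →
      |∑ j, δ j * θ j| ≤ τ * N := by
    intro δ hδ
    have h1 := Real.inner_le_Lp_mul_Lq (Finset.univ) δ θ hconj
    have h2 := Real.inner_le_Lp_mul_Lq (Finset.univ) (fun j => -δ j) θ hconj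
    simp only [abs_neg, neg_mul, Finset.sum_neg_distrib] at h2
    have hmul : (∑ j, |δ j| ^ β) ^ (1 / β) * (∑ j, |θ j| ^ βs) ^ (1 / βs) ≤ τ * N := by
      rw [← hSdef, ← hNdef]
      exact mul_le_mul_of_nonneg_right hδ hN0
    rw [abs_le]
    constructor
    · nlinarith
    · nlinarith
  -- upper bound on the value
  have hub : ∀ δ : Fin d → ℝ, (∑ j, |δ j| ^ β) ^ (1 / β) ≤ τ →
      (y - ∑ j, (x j + δ j) * θ j) ^ 2 ≤ (|r| + τ * N) ^ 2 := by
    intro δ hδ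
    rw [hobj δ]
    have h1 := hip δ hδ
    have h2 : |r - ∑ j, δ j * θ j| ≤ |r| + τ * N := by
      calc |r - ∑ j, δ j * θ j| ≤ |r| + |∑ j, δ j * θ j| := abs_sub _ _
        _ ≤ |r| + τ * N := by linarith
    rw [abs_le] at h2
    exact sq_le_sq' h2.1 h2.2
  have hbdd : BddAbove (Set.range fun δ : {δ : Fin d → ℝ // (∑ j, |δ j| ^ β) ^ (1 / β) ≤ τ} =>
      (y - ∑ j, (x j + δ.1 j) * θ j) ^ 2) := by
    refine ⟨(|r| + τ * N) ^ 2, ?_⟩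
    rintro v ⟨δ, rfl⟩
    exact hub δ.1 δ.2
  refine le_antisymm (ciSup_le fun δ => hub δ.1 δ.2) ?_
  -- now exhibit the maximizer
  by_cases hS : S = 0
  · -- θ = 0
    have hθ0 : ∀ j, θ j = 0 := by
      intro j
      have := (Finset.sum_eq_zero_iff_of_nonneg
        (fun j _ => Real.rpow_nonneg (abs_nonneg (θ j)) βs)).mp hS j (Finset.mem_univ j)
      have h2 : |θ j| = 0 := by
        by_contra h
        have habs : 0 < |θ j| := lt_of_le_of_ne (abs_nonneg _) (Ne.symm h)
        have := Real.rpow_pos_of_pos habs βs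
        linarith
      exact abs_eq_zero.mp h2
    have hN : N = 0 := by
      rw [hNdef, hS, Real.zero_rpow (by positivity : (1:ℝ)/βs ≠ 0)]
    have hrval : r = y := by
      simp [hr, hθ0]
    have hval0 : (y - ∑ j, (x j + (0 : Fin d → ℝ) j) * θ j) ^ 2 = (|r| + τ * N) ^ 2 := by
      simp [hθ0, hN, hrval, sq_abs]
    calc (|r| + τ * N) ^ 2 = (y - ∑ j, (x j + (0 : Fin d → ℝ) j) * θ j) ^ 2 := hval0.symm
      _ ≤ _ := le_ciSup hbdd ⟨0, h0feas⟩
  · have hSpos : 0 < S := lt_of_le_of_ne hS0 (Ne.symm hS)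
    have hNpos : 0 < N := Real.rpow_pos_of_pos hSpos _
    have hNβs : N ^ βs = S := by
      rw [hNdef, ← Real.rpow_mul hS0]
      rw [one_div_mul_cancel hβs.ne', Real.rpow_one]
    set s : ℝ := if 0 ≤ r then 1 else -1 with hsdef
    have hs_abs : |s| = 1 := by
      rw [hsdef]; split <;> norm_num
    set δ0 : Fin d → ℝ := fun j => -s * τ * θ j * |θ j| ^ (βs - 2) / N ^ (βs - 1) with hδ0def
    have hNβs1 : 0 < N ^ (βs - 1) := Real.rpow_pos_of_pos hNpos _
    -- pointwise identities
    have hA : ∀ j, δ0 j * θ j = -s * τ * |θ j| ^ βs / N ^ (βs - 1) := by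
      intro j
      by_cases hj : θ j = 0
      · simp [hδ0def, hj, Real.zero_rpow hβs.ne']
      · have habs : 0 < |θ j| := abs_pos.mpr hj
        have hm1 : |θ j| * |θ j| ^ (βs - 2) = |θ j| ^ (βs - 1) := by
          nth_rewrite 1 [← Real.rpow_one |θ j|]
          rw [← Real.rpow_add habs]; congr 1; ring
        have hm2 : |θ j| * |θ j| ^ (βs - 1) = |θ j| ^ βs := by
          nth_rewrite 1 [← Real.rpow_one |θ j|]
          rw [← Real.rpow_add habs]; congr 1; ring
        have hsq : θ j * θ j = |θ j| * |θ j| := (abs_mul_abs_self _).symm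
        calc δ0 j * θ j
            = -s * τ * (θ j * θ j * |θ j| ^ (βs - 2)) / N ^ (βs - 1) := by
              rw [hδ0def]; ring
          _ = -s * τ * (|θ j| * (|θ j| * |θ j| ^ (βs - 2))) / N ^ (βs - 1) := by
              rw [hsq]; ring_nf
          _ = -s * τ * |θ j| ^ βs / N ^ (βs - 1) := by rw [hm1, hm2]
    have hB : ∀ j, |δ0 j| = τ * |θ j| ^ (βs - 1) / N ^ (βs - 1) := by
      intro j
      by_cases hj : θ j = 0
      · simp [hδ0def, hj, Real.zero_rpow (by linarith : βs - 1 ≠ 0)]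
      · have habs : 0 < |θ j| := abs_pos.mpr hj
        have hmul : |θ j| * |θ j| ^ (βs - 2) = |θ j| ^ (βs - 1) := by
          nth_rewrite 1 [← Real.rpow_one |θ j|]
          rw [← Real.rpow_add habs]; congr 1; ring
        rw [hδ0def]
        rw [abs_div, abs_mul, abs_mul, abs_mul, abs_neg, hs_abs,
          abs_of_pos hτ, abs_of_nonneg (Real.rpow_nonneg (abs_nonneg _) _),
          abs_of_pos hNβs1]
        rw [mul_assoc, hmul, one_mul]
    -- inner product at the maximizer
    have hinner : ∑ j, δ0 j * θ j = -s * (τ * N) := by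
      have : ∑ j, δ0 j * θ j = (-s * τ / N ^ (βs - 1)) * ∑ j, |θ j| ^ βs := by
        rw [Finset.mul_sum]
        refine Finset.sum_congr rfl fun j _ => ?_
        rw [hA j]; ring
      rw [this, ← hSdef, ← hNβs]
      have hNe : N ^ βs = N * N ^ (βs - 1) := by
        nth_rewrite 1 [show βs = 1 + (βs - 1) by ring]
        rw [Real.rpow_add hNpos, Real.rpow_one]
      rw [hNe]
      field_simp
    -- feasibility of the maximizer
    have hfeas : (∑ j, |δ0 j| ^ β) ^ (1 / β) ≤ τ := by
      have hsum : ∑ j, |δ0 j| ^ β = τ ^ β := by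
        have hterm : ∀ j, |δ0 j| ^ β = τ ^ β * |θ j| ^ βs / S := by
          intro j
          rw [hB j, Real.div_rpow (by positivity) (le_of_lt hNβs1),
            Real.mul_rpow (le_of_lt hτ) (Real.rpow_nonneg (abs_nonneg _) _),
            ← Real.rpow_mul (abs_nonneg _), ← Real.rpow_mul (le_of_lt hNpos),
            hkey, hNβs]
        calc ∑ j, |δ0 j| ^ β = ∑ j, τ ^ β * |θ j| ^ βs / S :=
              Finset.sum_congr rfl fun j _ => hterm j
          _ = (τ ^ β / S) * ∑ j, |θ j| ^ βs := by rw [Finset.mul_sum]; exact Finset.sum_congr rfl fun j _ => by ring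
          _ = τ ^ β := by rw [← hSdef]; field_simp
      rw [hsum, ← Real.rpow_mul (le_of_lt hτ), mul_one_div, div_self hβ.ne', Real.rpow_one]
    -- value at the maximizer
    have hval : (y - ∑ j, (x j + δ0 j) * θ j) ^ 2 = (|r| + τ * N) ^ 2 := by
      rw [hobj δ0, hinner]
      have hτN : 0 ≤ τ * N := by positivity
      rw [hsdef]
      split
      · rename_i h
        rw [abs_of_nonneg h]; ring
      · rename_i h
        rw [abs_of_neg (lt_of_not_ge h)]; ring
    calc (|r| + τ * N) ^ 2 = (y - ∑ j, (x j + δ0 j) * θ j) ^ 2 := hval.symm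
      _ ≤ _ := le_ciSup hbdd ⟨δ0, hfeas⟩
end
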